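/- arXiv:1606.04088 — 8 statements merged into one kernel-verified Lean document; each statement's English description precedes it below -/
import Mathlib

section
/- Let (R,m) ⊆ (S,n) be a module-finite local extension of normal local domains whose fraction field extension K = Frac(R) ⊆ L = Frac(S) is finite and separable. Then the trace map satisfies Tr(n) ⊆ m. -/
set_option maxHeartbeats 1000000 in
set_option synthInstance.maxHeartbeats 1000000 in
/-- Let `(R,m) ⊆ (S,n)` be a module-finite local extension of normal local
domains whose fraction field extension `K ⊆ L` is finite and separable.  Then the trace map
satisfies `Tr(n) ⊆ m`; i.e. for every `s ∈ n` the field trace of `s` is (the image in `K` of)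
an element of `m`. -/
theorem trace_maximalIdeal_subset_maximalIdeal
    (R S K L : Type*)
    [CommRing R] [IsDomain R] [IsNoetherianRing R] [IsLocalRing R] [IsIntegrallyClosed R]
    [CommRing S] [IsDomain S] [IsNoetherianRing S] [IsLocalRing S] [IsIntegrallyClosed S]
    [Algebra R S] [Module.Finite R S]
    (hinj : Function.Injective (algebraMap R S))
    [IsLocalHom (algebraMap R S)]
    [Field K] [Field L] [Algebra R K] [IsFractionRing R K]
    [Algebra S L] [IsFractionRing S L]
    [Algebra K L] [Algebra R L] [IsScalarTower R S L] [IsScalarTower R K L]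
    [FiniteDimensional K L] [Algebra.IsSeparable K L] :
    ∀ s ∈ IsLocalRing.maximalIdeal S, ∃ r ∈ IsLocalRing.maximalIdeal R,
      algebraMap R K r = Algebra.trace K L (algebraMap S L s) := by
  intro s hs
  set E := AlgebraicClosure L
  have hsint : IsIntegral R s := IsIntegral.of_finite R s
  have hxint : IsIntegral R (algebraMap S L s) :=
    hsint.map (IsScalarTower.toAlgHom R S L)
  have htr : IsIntegral R (Algebra.trace K L (algebraMap S L s)) :=
    Algebra.isIntegral_trace hxint
  obtain ⟨r, hr⟩ := IsIntegrallyClosed.isIntegral_iff.mp htr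
  refine ⟨r, ?_, hr⟩
  set T := integralClosure R E with hT
  obtain ⟨M, hM⟩ := Ideal.exists_maximal T
  haveI : Algebra.IsIntegral R T := ⟨integralClosure.isIntegral⟩
  have hMR : Ideal.comap (algebraMap R T) M = IsLocalRing.maximalIdeal R :=
    IsLocalRing.eq_maximalIdeal (Ideal.isMaximal_comap_of_isIntegral_of_isMaximal M)
  -- the embeddings
  have key : ∀ σ : L →ₐ[K] E, ∃ t : T, (t : E) = σ (algebraMap S L s) ∧ t ∈ M := by
    intro σ
    set g : S →ₐ[R] E := (σ.restrictScalars R).comp (IsScalarTower.toAlgHom R S L) with hg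
    have hgmem : ∀ s' : S, g s' ∈ T := fun s' =>
      (IsIntegral.of_finite R s').map g
    set gT : S →ₐ[R] T := g.codRestrict T hgmem with hgT
    letI : Algebra S T := gT.toRingHom.toAlgebra
    haveI : IsScalarTower R S T :=
      IsScalarTower.of_algebraMap_eq fun r' => (gT.commutes r').symm
    haveI : Algebra.IsIntegral S T :=
      ⟨fun t => (integralClosure.isIntegral (R := R) (A := E) t).tower_top⟩
    have hMS : Ideal.comap (algebraMap S T) M = IsLocalRing.maximalIdeal S :=
      IsLocalRing.eq_maximalIdeal (Ideal.isMaximal_comap_of_isIntegral_of_isMaximal M)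
    have : algebraMap S T s ∈ M := by
      rw [← hMS] at hs; exact hs
    exact ⟨gT s, rfl, this⟩
  choose t ht hmem using key
  have hsum : (∑ σ : L →ₐ[K] E, t σ) ∈ M := Ideal.sum_mem _ fun σ _ => hmem σ
  have hval : ((∑ σ : L →ₐ[K] E, t σ : T) : E) = ∑ σ : L →ₐ[K] E, σ (algebraMap S L s) := by
    rw [AddSubmonoidClass.coe_finset_sum]
    exact Finset.sum_congr rfl fun σ _ => ht σ
  have htrace : algebraMap K E (Algebra.trace K L (algebraMap S L s)) =
      ∑ σ : L →ₐ[K] E, σ (algebraMap S L s) := trace_eq_sum_embeddings E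
  have hrT : algebraMap R T r = ∑ σ : L →ₐ[K] E, t σ := by
    apply Subtype.ext
    have : ((algebraMap R T r : T) : E) = algebraMap R E r := rfl
    rw [this, hval, ← htrace, ← hr, ← IsScalarTower.algebraMap_apply]
  have : algebraMap R T r ∈ M := hrT ▸ hsum
  rw [← hMR]
  exact this
end

section
/- Let (R,m) ⊆ (S,n) be a module-finite local extension of normal local domains of prime characteristic p with finite separable fraction field extension K ⊆ L. If the trace map Tr : S → R is surjective and the induced map of residue fields R/m → S/n is an isomorphism, then p does not divide [L : K]. -/
set_option synthInstance.maxHeartbeats 1000000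
set_option maxHeartbeats 2000000


/-- Let `(R,m) ⊆ (S,n)` be a module-finite local extension of normal local
domains of prime characteristic `p` with finite separable fraction field extension `K ⊆ L`.
If the trace map `Tr : S → R` is surjective and the induced map of residue fields is an
isomorphism, then `p` does not divide `[L : K]`. -/
theorem not_dvd_finrank_of_trace_surjective
    (R S K L : Type*)
    [CommRing R] [IsDomain R] [IsNoetherianRing R] [IsLocalRing R] [IsIntegrallyClosed R]
    [CommRing S] [IsDomain S] [IsNoetherianRing S] [IsLocalRing S] [IsIntegrallyClosed S]
    [Algebra R S] [Module.Finite R S]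
    (hinj : Function.Injective (algebraMap R S))
    [IsLocalHom (algebraMap R S)]
    [Field K] [Field L] [Algebra R K] [IsFractionRing R K]
    [Algebra S L] [IsFractionRing S L]
    [Algebra K L] [Algebra R L] [IsScalarTower R S L] [IsScalarTower R K L]
    [FiniteDimensional K L] [Algebra.IsSeparable K L]
    (p : ℕ) (hp : p.Prime) [CharP R p]
    (Tr : S →ₗ[R] R)
    (hTr : ∀ s : S, algebraMap R K (Tr s) = Algebra.trace K L (algebraMap S L s))
    (hTrSurj : Function.Surjective Tr)
    (hres : Function.Bijective (IsLocalRing.ResidueField.map (algebraMap R S))) :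
    ¬ p ∣ Module.finrank K L := by
  intro hdvd
  haveI : CharP K p := charP_of_injective_ringHom (IsFractionRing.injective R K) p
  -- Tr 1 = 0
  have htr1 : Tr 1 = 0 := by
    apply IsFractionRing.injective R K
    rw [hTr 1, map_one, map_zero]
    have h1 : (1 : L) = algebraMap K L 1 := by simp
    rw [h1, Algebra.trace_algebraMap, nsmul_eq_mul, mul_one]
    exact (CharP.cast_eq_zero_iff K p _).mpr hdvd
  -- key: trace of an element of the maximal ideal of S is in the maximal ideal of R
  have key : ∀ x ∈ IsLocalRing.maximalIdeal S, Tr x ∈ IsLocalRing.maximalIdeal R := by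
    intro x hx
    set E := AlgebraicClosure L
    haveI : Algebra.IsIntegral R S := Algebra.IsIntegral.of_finite R S
    set T := integralClosure R E with hT
    obtain ⟨Q, hQ⟩ := Ideal.exists_maximal T
    have hQR : Ideal.comap (algebraMap R T) Q = IsLocalRing.maximalIdeal R :=
      IsLocalRing.eq_maximalIdeal (Ideal.isMaximal_comap_of_isIntegral_of_isMaximal Q)
    -- for each embedding σ : L →ₐ[K] E, a map g σ : S →ₐ[R] T
    have hgen : ∀ σ : L →ₐ[K] E, ∀ s : S,
        ((σ.restrictScalars R).comp (IsScalarTower.toAlgHom R S L)) s ∈ T := by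
      intro σ s
      exact IsIntegral.map _ (Algebra.IsIntegral.isIntegral s)
    let g : (L →ₐ[K] E) → (S →ₐ[R] T) := fun σ =>
      AlgHom.codRestrict ((σ.restrictScalars R).comp (IsScalarTower.toAlgHom R S L))
        T (hgen σ)
    -- each g σ maps x into Q
    have hgx : ∀ σ : L →ₐ[K] E, g σ x ∈ Q := by
      intro σ
      have hP : Ideal.comap ((g σ) : S →+* T) Q = IsLocalRing.maximalIdeal S := by
        apply IsLocalRing.eq_maximalIdeal
        apply Ideal.isMaximal_of_isIntegral_of_isMaximal_comap (R := R)
        have hcomp : (Ideal.comap ((g σ) : S →+* T) Q).comap (algebraMap R S)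
            = Ideal.comap (algebraMap R T) Q := by
          rw [Ideal.comap_comap]
          congr 1
          exact ((g σ).comp_algebraMap).symm ▸ rfl
        rw [hcomp, hQR]
        exact IsLocalRing.maximalIdeal.isMaximal R
      have : x ∈ Ideal.comap ((g σ) : S →+* T) Q := by rw [hP]; exact hx
      exact this
    -- the trace is the sum of the embeddings
    have hsum : algebraMap K E (Algebra.trace K L (algebraMap S L x))
        = ∑ σ : L →ₐ[K] E, σ (algebraMap S L x) := trace_eq_sum_embeddings E
    have hsum' : (algebraMap R E) (Tr x) = ((∑ σ : L →ₐ[K] E, g σ x : T) : E) := by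
      rw [IsScalarTower.algebraMap_apply R K E, hTr x, hsum]
      push_cast
      rfl
    have hq : algebraMap R T (Tr x) = ∑ σ : L →ₐ[K] E, g σ x := by
      apply Subtype.coe_injective
      show ((algebraMap R T (Tr x) : T) : E) = ((∑ σ : L →ₐ[K] E, g σ x : T) : E)
      rw [← hsum']
      exact (IsScalarTower.algebraMap_apply R T E (Tr x)).symm
    have hmem : algebraMap R T (Tr x) ∈ Q := by
      rw [hq]
      exact Ideal.sum_mem Q fun σ _ => hgx σ
    rw [← hQR]
    exact hmem
  -- now derive the contradiction
  obtain ⟨s₀, hs₀⟩ := hTrSurj 1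
  obtain ⟨rbar, hrbar⟩ := hres.2 (IsLocalRing.residue S s₀)
  obtain ⟨r, rfl⟩ := Ideal.Quotient.mk_surjective rbar
  have hxmem : s₀ - algebraMap R S r ∈ IsLocalRing.maximalIdeal S := by
    have h1 : IsLocalRing.residue S (algebraMap R S r) = IsLocalRing.residue S s₀ := by
      rw [← IsLocalRing.ResidueField.map_residue (algebraMap R S) r]
      exact hrbar
    have : IsLocalRing.residue S (s₀ - algebraMap R S r) = 0 := by
      rw [map_sub, h1, sub_self]
    exact (Ideal.Quotient.eq_zero_iff_mem).mp this
  have htrx : Tr (s₀ - algebraMap R S r) = 1 := by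
    have : Tr (algebraMap R S r) = 0 := by
      rw [Algebra.algebraMap_eq_smul_one, map_smul, htr1, smul_zero]
    rw [map_sub, hs₀, this, sub_zero]
  have : (1 : R) ∈ IsLocalRing.maximalIdeal R := htrx ▸ key _ hxmem
  exact (IsLocalRing.maximalIdeal.isMaximal R).ne_top (Ideal.eq_top_of_isUnit_mem _ this isUnit_one)
end

section
/- Let (R,m) ⊆ (S,n) be a module-finite local extension of normal local domains of prime characteristic p with finite separable fraction field extension, and suppose the trace map Tr : S → R is surjective. Fix e ≥ 1 and let φ_R : R → R and φ_S : S → S be p^{-e}-linear maps such that Tr ∘ φ_S = φ_R ∘ Tr as maps of sets S → R. If φ_R(m) ⊆ m, then φ_S(n) ⊆ n. -/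
/-- A `p^{-e}`-linear map on a ring `A` of characteristic `p` is an additive map
`φ : A → A` with `φ (a ^ p ^ e * x) = a * φ x` for all `a x : A`. -/
def IsPInverseLinear {A : Type*} [CommRing A] (p e : ℕ) (φ : A → A) : Prop :=
  (∀ x y : A, φ (x + y) = φ x + φ y) ∧ ∀ a x : A, φ (a ^ p ^ e * x) = a * φ x

/-- Let `(R,m) ⊆ (S,n)` be a module-finite local extension of normal local
domains of prime characteristic `p` with finite separable fraction field extension, with
surjective trace map `Tr : S → R`.  Fix `e ≥ 1` and `p^{-e}`-linear maps `φ_R : R → R`,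
`φ_S : S → S` with `Tr ∘ φ_S = φ_R ∘ Tr`.  If `φ_R(m) ⊆ m`, then `φ_S(n) ⊆ n`. -/
theorem compatible_with_maximalIdeal_ascends
    (R S K L : Type*)
    [CommRing R] [IsDomain R] [IsNoetherianRing R] [IsLocalRing R] [IsIntegrallyClosed R]
    [CommRing S] [IsDomain S] [IsNoetherianRing S] [IsLocalRing S] [IsIntegrallyClosed S]
    [Algebra R S] [Module.Finite R S]
    (hinj : Function.Injective (algebraMap R S))
    [IsLocalHom (algebraMap R S)]
    [Field K] [Field L] [Algebra R K] [IsFractionRing R K]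
    [Algebra S L] [IsFractionRing S L]
    [Algebra K L] [Algebra R L] [IsScalarTower R S L] [IsScalarTower R K L]
    [FiniteDimensional K L] [Algebra.IsSeparable K L]
    (p : ℕ) (hp : p.Prime) [CharP R p] [CharP S p]
    (Tr : S →ₗ[R] R)
    (hTr : ∀ s : S, algebraMap R K (Tr s) = Algebra.trace K L (algebraMap S L s))
    (hTrSurj : Function.Surjective Tr)
    (e : ℕ) (he : 1 ≤ e)
    (φR : R → R) (hφR : IsPInverseLinear p e φR)
    (φS : S → S) (hφS : IsPInverseLinear p e φS)
    (hcomm : ∀ s : S, Tr (φS s) = φR (Tr s))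
    (hR : ∀ x ∈ IsLocalRing.maximalIdeal R, φR x ∈ IsLocalRing.maximalIdeal R) :
    ∀ x ∈ IsLocalRing.maximalIdeal S, φS x ∈ IsLocalRing.maximalIdeal S := by
  intro x hx
  by_contra hxu
  have hu : IsUnit (φS x) := by
    by_contra h
    exact hxu (IsLocalRing.mem_maximalIdeal _ |>.mpr h)
  obtain ⟨u, hux⟩ := hu
  set n : Ideal S := IsLocalRing.maximalIdeal S with hn
  set m : Ideal R := IsLocalRing.maximalIdeal R with hm
  set y : S := (↑u⁻¹ : S) ^ p ^ e * x with hy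
  have hyn : y ∈ n := Ideal.mul_mem_left _ _ hx
  have hφy : φS y = 1 := by
    rw [hy, hφS.2, ← hux, Units.inv_mul]
  have key : ∀ j : ℕ, ∀ s : S, ∃ z ∈ n ^ j, φS^[j] z = s := by
    intro j
    induction j with
    | zero => intro s; exact ⟨s, by simp, rfl⟩
    | succ j ih =>
      intro s
      obtain ⟨z, hz, hzs⟩ := ih s
      have hpe : p ^ e ≠ 0 := pow_ne_zero _ hp.pos.ne'
      obtain ⟨t, ht⟩ := Nat.exists_eq_succ_of_ne_zero hpe
      refine ⟨z ^ p ^ e * y, ?_, ?_⟩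
      · rw [pow_succ]
        refine Ideal.mul_mem_mul ?_ hyn
        rw [ht, pow_succ]
        exact Ideal.mul_mem_left _ _ hz
      · rw [Function.iterate_succ_apply, hφS.2, hφy, mul_one, hzs]
  have hint : Algebra.IsIntegral R S := Algebra.IsIntegral.of_finite R S
  obtain ⟨k, hk⟩ : ∃ k : ℕ, n ^ k ≤ m.map (algebraMap R S) := by
    obtain ⟨k, hk⟩ := Ideal.exists_radical_pow_le_of_fg (m.map (algebraMap R S))
      (IsNoetherian.noetherian _)
    refine ⟨k, le_trans (Ideal.pow_right_mono ?_ k) hk⟩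
    rw [Ideal.radical_eq_sInf]
    refine le_sInf ?_
    rintro q ⟨hq1, hq2⟩
    have hcm : q.comap (algebraMap R S) = m := by
      have hle : m ≤ q.comap (algebraMap R S) := by
        intro r hr
        exact Ideal.mem_comap.mpr (hq1 (Ideal.mem_map_of_mem _ hr))
      exact ((IsLocalRing.maximalIdeal.isMaximal R).eq_of_le
        (hq2.comap _).ne_top hle).symm
    have hqmax : q.IsMaximal := by
      refine Ideal.isMaximal_of_isIntegral_of_isMaximal_comap (R := R) q ?_
      rw [hcm]; exact IsLocalRing.maximalIdeal.isMaximal R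
    exact le_of_eq (IsLocalRing.eq_maximalIdeal hqmax).symm
  have hTrm : ∀ z : S, z ∈ m.map (algebraMap R S) → Tr z ∈ m := by
    intro z hz
    have hz' : z ∈ m • (⊤ : Submodule R S) := by
      rw [Ideal.smul_top_eq_map]; exact hz
    have hmem : Tr z ∈ Submodule.map Tr (m • (⊤ : Submodule R S)) :=
      Submodule.mem_map_of_mem hz'
    rw [Submodule.map_smul''] at hmem
    have hle : m • (Submodule.map Tr ⊤) ≤ m := by
      refine Submodule.smul_le.mpr ?_
      intro r hr t _
      exact Ideal.mul_mem_right t _ hr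
    exact hle hmem
  have hiter_comm : ∀ (j : ℕ) (s : S), Tr (φS^[j] s) = φR^[j] (Tr s) := by
    intro j
    induction j with
    | zero => intro s; rfl
    | succ j ih =>
      intro s
      rw [Function.iterate_succ_apply, ih, hcomm, ← Function.iterate_succ_apply]
  have hRiter : ∀ (j : ℕ) (r : R), r ∈ m → φR^[j] r ∈ m := by
    intro j
    induction j with
    | zero => intro r hr; exact hr
    | succ j ih =>
      intro r hr
      rw [Function.iterate_succ_apply']
      exact hR _ (ih r hr)
  obtain ⟨s0, hs0⟩ := hTrSurj 1
  obtain ⟨z, hz, hzs⟩ := key k s0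
  have h1 : (1 : R) ∈ m := by
    rw [← hs0, ← hzs, hiter_comm]
    exact hRiter k _ (hTrm z (hk hz))
  exact (IsLocalRing.maximalIdeal.isMaximal R).ne_top
    (Ideal.eq_top_of_isUnit_mem _ h1 isUnit_one)
end

section
/- Let (R,m) be a Noetherian local ring of prime characteristic p and fix e ≥ 1. If there exists a surjective p^{-e}-linear map ψ : R → R, then there exists a surjective p^{-e}-linear map φ : R → R with φ(m) ⊆ m. -/
theorem Ideal.exists_pow_le_span_image_pow {R : Type*} [CommRing R] {I : Ideal R} (hI : I.FG)
    (q : ℕ) : ∃ n, I ^ n ≤ Ideal.span ((· ^ q) '' I) :=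
  Ideal.exists_pow_le_of_le_radical_of_fg
    (fun x hx => ⟨q, Ideal.subset_span ⟨x, hx, rfl⟩⟩) hI

namespace IsPInverseLinear

variable {A : Type*} [CommRing A] {p e : ℕ} {φ : A → A}

theorem map_zero (hφ : IsPInverseLinear p e φ) : φ 0 = 0 := by
  have h := hφ.1 0 0
  rwa [add_zero, left_eq_add] at h

theorem mul_left (hφ : IsPInverseLinear p e φ) (u : A) :
    IsPInverseLinear p e (fun x => φ (u * x)) := by
  refine ⟨fun x y => by simp only [mul_add, hφ.1], fun a x => ?_⟩
  simp only [mul_left_comm u, hφ.2]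

theorem surjective_mul_left (hφ : IsPInverseLinear p e φ) {u : A} (hu : φ u = 1) :
    Function.Surjective (fun x => φ (u * x)) :=
  fun b => ⟨b ^ p ^ e, by simp only [mul_comm u, hφ.2, hu, mul_one]⟩

theorem exists_map_mul_eq_one (hφ : IsPInverseLinear p e φ) {x : A} (hx : IsUnit (φ x)) :
    ∃ c, φ (c * x) = 1 := by
  obtain ⟨w, hw⟩ := hx
  exact ⟨(↑w⁻¹ : A) ^ p ^ e, by rw [hφ.2, ← hw, Units.inv_mul]⟩

theorem map_mem_span_of_mem_span_image_pow (hφ : IsPInverseLinear p e φ) {S : Set A} {y : A}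
    (hy : y ∈ Ideal.span ((· ^ p ^ e) '' S)) : φ y ∈ Ideal.span S := by
  -- Induct on the stronger claim that every multiple `a * y` is sent into `span S`.
  suffices ∀ a, φ (a * y) ∈ Ideal.span S by simpa using this 1
  induction hy using Submodule.span_induction with
  | mem _ hx =>
    obtain ⟨x, hxS, rfl⟩ := hx
    intro a
    rw [mul_comm, hφ.2]
    exact Ideal.mul_mem_right _ _ (Ideal.subset_span hxS)
  | zero => simp only [mul_zero, hφ.map_zero, zero_mem, implies_true]
  | add y z _ _ hy hz => exact fun a => by rw [mul_add, hφ.1]; exact add_mem (hy a) (hz a)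
  | smul b y _ hy => exact fun a => by rw [smul_eq_mul, ← mul_assoc]; exact hy _

theorem exists_forall_mem_pow_map_mem (hφ : IsPInverseLinear p e φ) {I : Ideal A} (hI : I.FG) :
    ∃ N, ∀ y ∈ I ^ N, φ y ∈ I := by
  obtain ⟨N, hN⟩ := Ideal.exists_pow_le_span_image_pow hI (p ^ e)
  refine ⟨N, fun y hy => ?_⟩
  simpa only [Ideal.span_eq] using hφ.map_mem_span_of_mem_span_image_pow (hN hy)

end IsPInverseLinear

theorem exists_surjective_pinverse_linear_compatible_with_maximalIdeal_general
    (R : Type*) [CommRing R] [IsNoetherianRing R] [IsLocalRing R]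
    (p : ℕ)
    (e : ℕ)
    (ψ : R → R) (hψ : IsPInverseLinear p e ψ) (hψsurj : Function.Surjective ψ) :
    ∃ φ : R → R, IsPInverseLinear p e φ ∧ Function.Surjective φ ∧
      ∀ x ∈ IsLocalRing.maximalIdeal R, φ x ∈ IsLocalRing.maximalIdeal R := by
  set m := IsLocalRing.maximalIdeal R
  set P : ℕ → Prop := fun n => ∃ u ∈ m ^ n, ψ u = 1
  obtain ⟨N, hN⟩ := hψ.exists_forall_mem_pow_map_mem (IsNoetherian.noetherian m)
  have hP : ∃ n, P n ∧ ¬ P (n + 1) := by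
    by_contra! hsucc
    have hP0 : P 0 := by
      obtain ⟨u, hu⟩ := hψsurj 1
      exact ⟨u, by simp, hu⟩
    obtain ⟨u, hu, hu1⟩ : P N := Nat.rec hP0 hsucc N
    exact (IsLocalRing.maximalIdeal.isMaximal R).ne_top
      ((Ideal.eq_top_iff_one m).2 (hu1 ▸ hN u hu))
  obtain ⟨n, ⟨u, hu, hu1⟩, hmax⟩ := hP
  refine ⟨_, hψ.mul_left u, hψ.surjective_mul_left hu1, fun t ht => ?_⟩
  by_contra hunit
  obtain ⟨c, hc⟩ := hψ.exists_map_mul_eq_one (IsLocalRing.notMem_maximalIdeal.1 hunit)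
  exact hmax ⟨c * (u * t), Ideal.mul_mem_left _ _ (pow_succ m n ▸ Ideal.mul_mem_mul hu ht), hc⟩

/-- Let `(R,m)` be a Noetherian local ring of prime characteristic `p` and fix
`e ≥ 1`.  If there is a surjective `p^{-e}`-linear map `ψ : R → R`, then there is a surjective
`p^{-e}`-linear map `φ : R → R` with `φ(m) ⊆ m`. -/
theorem exists_surjective_pinverse_linear_compatible_with_maximalIdeal
    (R : Type*) [CommRing R] [IsNoetherianRing R] [IsLocalRing R]
    (p : ℕ) (hp : p.Prime) [CharP R p]
    (e : ℕ) (he : 1 ≤ e)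
    (ψ : R → R) (hψ : IsPInverseLinear p e ψ) (hψsurj : Function.Surjective ψ) :
    ∃ φ : R → R, IsPInverseLinear p e φ ∧ Function.Surjective φ ∧
      ∀ x ∈ IsLocalRing.maximalIdeal R, φ x ∈ IsLocalRing.maximalIdeal R :=
  exists_surjective_pinverse_linear_compatible_with_maximalIdeal_general R p e ψ hψ hψsurj
end

section
/- Let (R,m,k) ⊆ (S,n,ℓ) be a module-finite local inclusion of complete (adically complete with respect to their maximal ideals) F-finite normal local domains of prime characteristic p, with fraction fields K ⊆ L, and suppose the residue field extension k ⊆ ℓ is separable. Then [ℓ : k] divides [L : K]. -/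
/-!
Choose a primitive element `θ` of the separable extension `ℓ/k` and lift its minimal polynomial
to a monic `g ∈ R[X]`. Since `θ` is a simple root of `g mod m`, Hensel's lemma in the complete
ring `S` lifts `θ` to a root `s ∈ S` of `g`. The reduction of `g` is irreducible, hence so is
`g`, and by Gauss's lemma for the normal domain `R` it stays irreducible over `K`. So `g` is
the minimal polynomial of `s` over `K`, and `[ℓ : k] = deg g = [K(s) : K]` divides `[L : K]`.
-/

/-- A ring `A` of characteristic `p` is `F`-finite if the Frobenius `a ↦ a ^ p` is a
module-finite ring homomorphism. -/
def IsFFinite (p : ℕ) (A : Type*) [CommRing A] : Prop :=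
  ∃ f : A →+* A, (∀ x : A, f x = x ^ p) ∧ f.Finite

open IsLocalRing Polynomial

theorem HenselianLocalRing.of_henselianRing (S : Type*) [CommRing S] [IsLocalRing S]
    [HenselianRing S (maximalIdeal S)] : HenselianLocalRing S where
  is_henselian f hf a₀ h₁ h₂ := HenselianRing.is_henselian f hf a₀ h₁ (h₂.map _)

theorem HenselianLocalRing.exists_isRoot_residue_eq {S : Type*} [CommRing S]
    [HenselianLocalRing S] {f : S[X]} (hf : f.Monic) {θ : ResidueField S}
    (h₁ : aeval θ f = 0) (h₂ : aeval θ (derivative f) ≠ 0) :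
    ∃ s : S, f.IsRoot s ∧ residue S s = θ := by
  have hensel := (HenselianLocalRing.TFAE S).out 0 1
  exact hensel.mp ‹_› f hf θ h₁ h₂

theorem IsLocalRing.exists_monic_map_residue_eq (R : Type*) [CommRing R] [IsLocalRing R]
    {f : (ResidueField R)[X]} (hf : f.Monic) :
    ∃ g : R[X], g.map (residue R) = f ∧ g.natDegree = f.natDegree ∧ g.Monic :=
  lifts_and_natDegree_eq_and_monic
    ((lifts_iff_coeff_lifts _).mpr fun _ ↦ residue_surjective _) hf

theorem Polynomial.Monic.irreducible_map_fractionRing_of_irreducible_map_residue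
    {R : Type*} (K : Type*) [CommRing R] [IsDomain R] [IsIntegrallyClosed R] [IsLocalRing R]
    [Field K] [Algebra R K] [IsFractionRing R K] {g : R[X]} (hg : g.Monic)
    (hirr : Irreducible (g.map (residue R))) : Irreducible (g.map (algebraMap R K)) :=
  hg.irreducible_iff_irreducible_map_fraction_map.mp (hg.irreducible_of_irreducible_map _ _ hirr)

section ResidueFieldExtension

variable {R S : Type*} [CommRing R] [IsLocalRing R] [CommRing S] [HenselianLocalRing S]
  [Algebra R S] [IsLocalHom (algebraMap R S)]

theorem exists_monic_lift_minpoly_residue_with_root {θ : ResidueField S}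
    (hθ : IsSeparable (ResidueField R) θ) :
    ∃ g : R[X], g.Monic ∧ g.map (residue R) = minpoly (ResidueField R) θ ∧
      ∃ s : S, aeval s g = 0 := by
  have hint := hθ.isIntegral
  obtain ⟨g, hg_map, -, hg_monic⟩ := exists_monic_map_residue_eq R (minpoly.monic hint)
  have hG : ∀ q : R[X], aeval θ (q.map (algebraMap R S)) = aeval θ (q.map (residue R)) := by
    intro q
    rw [aeval_map_algebraMap, ← ResidueField.algebraMap_eq, aeval_map_algebraMap]
  obtain ⟨s, hs, -⟩ := HenselianLocalRing.exists_isRoot_residue_eq (hg_monic.map _) (θ := θ)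
    (by rw [hG, hg_map, minpoly.aeval])
    (by rw [derivative_map, hG, ← derivative_map, hg_map]
        exact hθ.aeval_derivative_ne_zero (minpoly.aeval _ _))
  exact ⟨g, hg_monic, hg_map, s, by rwa [← eval_map_algebraMap]⟩

end ResidueFieldExtension

section FractionFields

variable {R S : Type*} [CommRing R] [IsDomain R] [IsIntegrallyClosed R] [IsLocalRing R]
  [CommRing S] [HenselianLocalRing S] [Algebra R S] [IsLocalHom (algebraMap R S)]
  (K L : Type*) [Field K] [Field L] [Algebra R K] [IsFractionRing R K]
  [Algebra S L] [Algebra K L] [Algebra R L] [IsScalarTower R S L] [IsScalarTower R K L]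

open Module in
theorem finrank_residueField_dvd_finrank
    [FiniteDimensional (ResidueField R) (ResidueField S)]
    [Algebra.IsSeparable (ResidueField R) (ResidueField S)] :
    finrank (ResidueField R) (ResidueField S) ∣ finrank K L := by
  obtain ⟨θ, hθ⟩ := Field.exists_primitive_element (ResidueField R) (ResidueField S)
  obtain ⟨g, hg_monic, hg_map, s, hs⟩ :=
    exists_monic_lift_minpoly_residue_with_root
      (Algebra.IsSeparable.isSeparable (ResidueField R) θ)
  set x := algebraMap S L s
  have hgK_monic : (g.map (algebraMap R K)).Monic := hg_monic.map _
  have hroot : aeval x (g.map (algebraMap R K)) = 0 := by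
    rw [aeval_map_algebraMap, aeval_algebraMap_apply, hs, map_zero]
  have hirr : Irreducible (g.map (algebraMap R K)) :=
    hg_monic.irreducible_map_fractionRing_of_irreducible_map_residue K
      (hg_map ▸ minpoly.irreducible (Algebra.IsSeparable.isIntegral _ θ))
  have hmin : minpoly K x = g.map (algebraMap R K) :=
    (minpoly.eq_of_irreducible_of_monic hirr hroot hgK_monic).symm
  calc finrank (ResidueField R) (ResidueField S)
      = (minpoly (ResidueField R) θ).natDegree :=
        ((Field.primitive_element_iff_minpoly_natDegree_eq _ θ).mp hθ).symm
    _ = (minpoly K x).natDegree := by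
        rw [hmin, hg_monic.natDegree_map, ← hg_map, hg_monic.natDegree_map]
    _ ∣ finrank K L := minpoly.degree_dvd ⟨_, hgK_monic, hroot⟩

end FractionFields

theorem residue_degree_dvd_of_complete_general
    (R S K L : Type*)
    [CommRing R] [IsDomain R] [IsLocalRing R] [IsIntegrallyClosed R]
    [CommRing S] [IsLocalRing S]
    [IsAdicComplete (IsLocalRing.maximalIdeal S) S]
    [Algebra R S] [Module.Finite R S]
    [IsLocalHom (algebraMap R S)]
    [Field K] [Field L] [Algebra R K] [IsFractionRing R K]
    [Algebra S L]
    [Algebra K L] [Algebra R L] [IsScalarTower R S L] [IsScalarTower R K L]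
    (hsep :
      letI : Algebra (IsLocalRing.ResidueField R) (IsLocalRing.ResidueField S) :=
        (IsLocalRing.ResidueField.map (algebraMap R S)).toAlgebra
      Algebra.IsSeparable (IsLocalRing.ResidueField R) (IsLocalRing.ResidueField S)) :
    letI : Algebra (IsLocalRing.ResidueField R) (IsLocalRing.ResidueField S) :=
      (IsLocalRing.ResidueField.map (algebraMap R S)).toAlgebra
    Module.finrank (IsLocalRing.ResidueField R) (IsLocalRing.ResidueField S) ∣
      Module.finrank K L := by
  have := HenselianLocalRing.of_henselianRing S
  -- the statement's residue-field algebra is not reducibly defeq to Mathlib's instance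
  have halg : (ResidueField.map (algebraMap R S)).toAlgebra = ResidueField.instAlgebra :=
    Algebra.algebra_ext _ _ fun _ ↦ rfl
  have : Algebra.IsSeparable (ResidueField R) (ResidueField S) := halg ▸ hsep
  convert finrank_residueField_dvd_finrank (R := R) (S := S) K L

/-- Let `(R,m,k) ⊆ (S,n,ℓ)` be a module-finite local inclusion of complete
`F`-finite normal local domains of prime characteristic `p`, with fraction fields `K ⊆ L`, and
suppose the residue field extension `k ⊆ ℓ` is separable.  Then `[ℓ : k]` divides `[L : K]`. -/
theorem residue_degree_dvd_of_complete
    (R S K L : Type*)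
    [CommRing R] [IsDomain R] [IsNoetherianRing R] [IsLocalRing R] [IsIntegrallyClosed R]
    [CommRing S] [IsDomain S] [IsNoetherianRing S] [IsLocalRing S] [IsIntegrallyClosed S]
    [IsAdicComplete (IsLocalRing.maximalIdeal R) R]
    [IsAdicComplete (IsLocalRing.maximalIdeal S) S]
    [Algebra R S] [Module.Finite R S]
    (hinj : Function.Injective (algebraMap R S))
    [IsLocalHom (algebraMap R S)]
    [Field K] [Field L] [Algebra R K] [IsFractionRing R K]
    [Algebra S L] [IsFractionRing S L]
    [Algebra K L] [Algebra R L] [IsScalarTower R S L] [IsScalarTower R K L]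
    (p : ℕ) (hp : p.Prime) [CharP R p] [CharP S p]
    (hFR : IsFFinite p R) (hFS : IsFFinite p S)
    (hsep :
      letI : Algebra (IsLocalRing.ResidueField R) (IsLocalRing.ResidueField S) :=
        (IsLocalRing.ResidueField.map (algebraMap R S)).toAlgebra
      Algebra.IsSeparable (IsLocalRing.ResidueField R) (IsLocalRing.ResidueField S)) :
    letI : Algebra (IsLocalRing.ResidueField R) (IsLocalRing.ResidueField S) :=
      (IsLocalRing.ResidueField.map (algebraMap R S)).toAlgebra
    Module.finrank (IsLocalRing.ResidueField R) (IsLocalRing.ResidueField S) ∣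
      Module.finrank K L :=
  residue_degree_dvd_of_complete_general R S K L hsep
end

section
/- Let (R,m,k) ⊆ (S,n,ℓ) be a module-finite local extension of normal local domains with finite separable fraction field extension K ⊆ L. If the trace map Tr : S → R is surjective and [ℓ : k] = [L : K], then S is a free R-module. -/
/-!
Lift a `k`-basis of `ℓ` to `e₁, …, eₙ ∈ S`, where `n = [ℓ : k] = [L : K]`, and consider
`ψ : S → Rⁿ, s ↦ (Tr (eᵢ s))ᵢ`. If `ψ` were not surjective, Nakayama's lemma and duality over `k`
would give `c ∈ Rⁿ`, not all in `m`, with `Tr (v s) ∈ m` for all `s`, where `v = ∑ cᵢ eᵢ`. As the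
residues of the `eᵢ` are independent, `v` is a unit, so `Tr S = Tr (v S) ⊆ m`, which contradicts the
surjectivity of `Tr`. Thus `ψ` maps the torsion-free module `S` of rank `[L : K] = n` onto `Rⁿ`,
and is therefore an isomorphism.
-/

open IsLocalRing Module Function

theorem Submodule.eq_top_of_forall_dotProduct_eq_zero {k ι : Type*} [Field k] [Fintype ι]
    {W : Submodule k (ι → k)} (h : ∀ c : ι → k, (∀ w ∈ W, c ⬝ᵥ w = 0) → c = 0) : W = ⊤ := by
  classical
  rw [← Submodule.dualAnnihilator_eq_bot_iff, eq_bot_iff]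
  intro f hf
  obtain ⟨c, rfl⟩ := (dotProductEquiv k ι).surjective f
  rw [h c ((Submodule.mem_dualAnnihilator _).mp hf), map_zero]
  exact zero_mem _

theorem Submodule.mem_smul_top_of_forall_mem {R ι : Type*} [CommRing R] [Fintype ι] {I : Ideal R}
    {x : ι → R} (hx : ∀ i, x i ∈ I) : x ∈ I • (⊤ : Submodule R (ι → R)) := by
  classical
  rw [pi_eq_sum_univ x]
  exact Submodule.sum_mem _ fun i _ ↦ Submodule.smul_mem_smul (hx i) trivial

theorem IsLocalRing.eq_top_of_forall_dotProduct_mem_maximalIdeal {R ι : Type*} [CommRing R]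
    [IsLocalRing R] [Fintype ι] {N : Submodule R (ι → R)}
    (h : ∀ c : ι → R, (∀ x ∈ N, c ⬝ᵥ x ∈ maximalIdeal R) → ∀ i, c i ∈ maximalIdeal R) :
    N = ⊤ := by
  let π : (ι → R) →ₗ[R] ι → ResidueField R := ((Algebra.ofId R _).compLeft ι).toLinearMap
  have hspan : Submodule.span (ResidueField R) (π '' N) = ⊤ := by
    refine Submodule.eq_top_of_forall_dotProduct_eq_zero fun c hc ↦ ?_
    obtain ⟨c, rfl⟩ := residue_surjective.comp_left c
    funext i
    refine (residue_eq_zero_iff _).mpr (h c (fun x hx ↦ ?_) i)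
    rw [← residue_eq_zero_iff, RingHom.map_dotProduct]
    exact hc (π x) (Submodule.subset_span ⟨x, hx, rfl⟩)
  have hmap : N.map π = ⊤ := by
    rw [← Submodule.span_eq N, ← Submodule.span_image, ← Submodule.restrictScalars_span R _
      residue_surjective, hspan, Submodule.restrictScalars_top]
  refine top_le_iff.mp <| Submodule.le_of_le_smul_of_le_jacobson_bot Module.Finite.fg_top
    (jacobson_eq_maximalIdeal ⊥ bot_ne_top).ge fun y _ ↦ ?_
  obtain ⟨x, hx, hxy⟩ : π y ∈ N.map π := hmap ▸ Submodule.mem_top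
  refine Submodule.mem_sup.mpr ⟨x, hx, y - x, Submodule.mem_smul_top_of_forall_mem fun i ↦ ?_,
    add_sub_cancel x y⟩
  exact Ideal.Quotient.eq.mp (congrFun hxy i).symm

section

variable {R S : Type*} [CommRing R] [IsLocalRing R] [CommRing S] [IsLocalRing S] [Algebra R S]

theorem IsLocalRing.mem_maximalIdeal_of_forall_apply_mul_mem {φ : S →ₗ[R] R} (hφ : Surjective φ)
    {v : S} (hv : ∀ s, φ (v * s) ∈ maximalIdeal R) : v ∈ maximalIdeal S := by
  by_contra hunit
  obtain ⟨u, rfl⟩ := notMem_maximalIdeal.mp hunit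
  obtain ⟨s, hs⟩ := hφ 1
  have := hv (↑u⁻¹ * s)
  rw [u.mul_inv_cancel_left, hs] at this
  exact (maximalIdeal.isMaximal R).ne_top ((Ideal.eq_top_iff_one _).mpr this)

variable [IsLocalHom (algebraMap R S)]

theorem IsLocalRing.mem_maximalIdeal_of_sum_smul_mem {ι : Type*} [Fintype ι] {e : ι → S}
    (he : LinearIndependent (ResidueField R) (residue S ∘ e)) {c : ι → R}
    (hc : ∑ i, c i • e i ∈ maximalIdeal S) (i : ι) : c i ∈ maximalIdeal R := by
  have : ∑ i, residue R (c i) • residue S (e i) = 0 := by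
    rw [← residue_eq_zero_iff, map_sum] at hc
    simpa only [Algebra.smul_def, map_mul, ResidueField.algebraMap_residue] using hc
  exact (residue_eq_zero_iff _).mp (Fintype.linearIndependent_iff.mp he _ this i)

theorem IsLocalRing.surjective_pi_comp_mulLeft {ι : Type*} [Fintype ι] {φ : S →ₗ[R] R}
    (hφ : Surjective φ) {e : ι → S} (he : LinearIndependent (ResidueField R) (residue S ∘ e)) :
    Surjective (LinearMap.pi fun i ↦ φ ∘ₗ LinearMap.mulLeft R (e i)) := by
  rw [← LinearMap.range_eq_top]
  refine eq_top_of_forall_dotProduct_mem_maximalIdeal fun c hc ↦ mem_maximalIdeal_of_sum_smul_mem he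
    (mem_maximalIdeal_of_forall_apply_mul_mem hφ fun s ↦ ?_)
  convert hc _ ⟨s, rfl⟩ using 1
  simp [dotProduct, Finset.sum_mul]

end

theorem LinearMap.injective_of_surjective_of_finrank_le {R M N : Type*} [CommRing R] [IsDomain R]
    [AddCommGroup M] [Module R M] [IsTorsionFree R M] [Module.Finite R M] [AddCommGroup N]
    [Module R N] (f : M →ₗ[R] N) (hf : Surjective f) (h : finrank R M ≤ finrank R N) :
    Injective f := by
  have := Submodule.disjoint_ker_of_finrank_le (L := ⊤) f
    (by rwa [finrank_top, Submodule.map_top, range_eq_top.mpr hf, finrank_top])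
  rwa [top_disjoint, ker_eq_bot] at this

theorem free_of_trace_surjective_of_residue_degree_eq_general
    (R S K L : Type*)
    [CommRing R] [IsDomain R] [IsLocalRing R]
    [CommRing S] [IsDomain S] [IsLocalRing S]
    [Algebra R S] [Module.Finite R S]
    (hinj : Function.Injective (algebraMap R S))
    [IsLocalHom (algebraMap R S)]
    [Field K] [Field L] [Algebra R K] [IsFractionRing R K]
    [Algebra S L] [IsFractionRing S L]
    [Algebra K L] [Algebra R L] [IsScalarTower R S L] [IsScalarTower R K L]
    (Tr : S →ₗ[R] R)
    (hTrSurj : Function.Surjective Tr)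
    (hdeg :
      letI : Algebra (IsLocalRing.ResidueField R) (IsLocalRing.ResidueField S) :=
        (IsLocalRing.ResidueField.map (algebraMap R S)).toAlgebra
      Module.finrank (IsLocalRing.ResidueField R) (IsLocalRing.ResidueField S) =
        Module.finrank K L) :
    Module.Free R S := by
  have : IsTorsionFree R S := isTorsionFree_iff_algebraMap_injective.mpr hinj
  -- `hdeg` is stated for `ResidueField.map`, which is definitionally the library instance.
  let b := finBasisOfFinrankEq (ResidueField R) (ResidueField S) hdeg
  choose e he using fun i ↦ residue_surjective (b i)
  let ψ := LinearMap.pi fun i ↦ Tr ∘ₗ LinearMap.mulLeft R (e i)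
  have hψsurj : Surjective ψ :=
    surjective_pi_comp_mulLeft hTrSurj (by convert b.linearIndependent; exact funext he)
  have hψinj : Injective ψ := ψ.injective_of_surjective_of_finrank_le hψsurj <| by
    rw [finrank_fin_fun, IsFractionRing.finrank_eq R K S L]
  exact .of_equiv (LinearEquiv.ofBijective ψ ⟨hψinj, hψsurj⟩).symm

/-- Let `(R,m,k) ⊆ (S,n,ℓ)` be a module-finite local extension of normal local
domains with finite separable fraction field extension `K ⊆ L`.  If the trace map `Tr : S → R`
is surjective and `[ℓ : k] = [L : K]`, then `S` is a free `R`-module. -/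
theorem free_of_trace_surjective_of_residue_degree_eq
    (R S K L : Type*)
    [CommRing R] [IsDomain R] [IsNoetherianRing R] [IsLocalRing R] [IsIntegrallyClosed R]
    [CommRing S] [IsDomain S] [IsNoetherianRing S] [IsLocalRing S] [IsIntegrallyClosed S]
    [Algebra R S] [Module.Finite R S]
    (hinj : Function.Injective (algebraMap R S))
    [IsLocalHom (algebraMap R S)]
    [Field K] [Field L] [Algebra R K] [IsFractionRing R K]
    [Algebra S L] [IsFractionRing S L]
    [Algebra K L] [Algebra R L] [IsScalarTower R S L] [IsScalarTower R K L]
    [FiniteDimensional K L] [Algebra.IsSeparable K L]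
    (Tr : S →ₗ[R] R)
    (hTr : ∀ s : S, algebraMap R K (Tr s) = Algebra.trace K L (algebraMap S L s))
    (hTrSurj : Function.Surjective Tr)
    (hdeg :
      letI : Algebra (IsLocalRing.ResidueField R) (IsLocalRing.ResidueField S) :=
        (IsLocalRing.ResidueField.map (algebraMap R S)).toAlgebra
      Module.finrank (IsLocalRing.ResidueField R) (IsLocalRing.ResidueField S) =
        Module.finrank K L) :
    Module.Free R S :=
  free_of_trace_surjective_of_residue_degree_eq_general R S K L hinj Tr hTrSurj hdeg
end

section
/- Let (R,m) ⊆ (S,n) be a module-finite local extension of normal local domains with finite separable fraction field extension, and suppose Hom_R(S,R) is generated as an S-module by the trace map Tr : S → R, where S acts on Hom_R(S,R) by premultiplication (s·φ)(x) = φ(sx). Then for every S-module N, every R-linear map ψ : N → R factors as ψ = Tr ∘ g for some S-linear map g : N → S; moreover, if ψ is surjective then g is surjective. Consequently, if N has no nonzero free S-module direct summand, then N has no nonzero free R-module direct summand. -/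
/-!
Since the trace form is nondegenerate, `s ↦ Tr (s * ·)` is an isomorphism `S ≃ Hom_R(S, R)`.
Hence for `ψ : N → R` and `x : N` the functional `s ↦ ψ (s • x)` is `Tr (g x * ·)` for a unique
`g x : S`, and uniqueness makes `g` `S`-linear; evaluating at `s = 1` gives `ψ = Tr ∘ g`.
The trace of an element of the maximal ideal of `S` is a sum of conjugates, all of which lie in
any maximal ideal of the integral closure of `R` in an algebraic closure of `K`; so it is not a
unit. If `ψ` is onto, `Tr (g x) = 1` for some `x`, hence `g x` is a unit and `g` is onto.
-/

universe v

open IsLocalRing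

section TraceDuality

variable {R S : Type*} [CommRing R] [CommRing S] [Algebra R S] {Tr : S →ₗ[R] R}
  {N : Type*} [AddCommGroup N] [Module R N] [Module S N] [IsScalarTower R S N]

theorem exists_linearMap_eq_trace_comp (hnd : ∀ s : S, (∀ x, Tr (s * x) = 0) → s = 0)
    (hgen : ∀ ψ : S →ₗ[R] R, ∃ s : S, ∀ x, ψ x = Tr (s * x)) (ψ : N →ₗ[R] R) :
    ∃ g : N →ₗ[S] S, ∀ x, ψ x = Tr (g x) := by
  have eq_of_trace : ∀ a b : S, (∀ t, Tr (a * t) = Tr (b * t)) → a = b := fun a b h =>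
    sub_eq_zero.mp <| hnd _ fun t => by rw [sub_mul, map_sub, h, sub_self]
  choose g hg using fun x : N => hgen (ψ ∘ₗ (LinearMap.toSpanSingleton S N x).restrictScalars R)
  simp only [LinearMap.coe_comp, LinearMap.coe_restrictScalars, Function.comp_apply,
    LinearMap.toSpanSingleton_apply] at hg
  refine ⟨{ toFun := g, map_add' := fun x y => ?_, map_smul' := fun s x => ?_ }, fun x => ?_⟩
  · refine eq_of_trace _ _ fun t => ?_
    rw [← hg, add_mul, map_add, ← hg, ← hg, smul_add, map_add]
  · refine eq_of_trace _ _ fun t => ?_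
    rw [← hg, RingHom.id_apply, smul_eq_mul, mul_comm s, mul_assoc, ← hg, smul_smul, mul_comm]
  · simpa using hg x 1

theorem LinearMap.surjective_of_isUnit_apply (g : N →ₗ[S] S) {x : N} (hx : IsUnit (g x)) :
    Function.Surjective g := fun y =>
  ⟨(y * hx.unit⁻¹) • x, by rw [map_smul, smul_eq_mul, mul_assoc, hx.val_inv_mul, mul_one]⟩

end TraceDuality

section FractionFields

variable {R S K L : Type*} [CommRing R] [CommRing S] [Algebra R S] [Field K] [Field L]
  [Algebra R K] [Algebra S L] [Algebra K L] [Algebra R L] [IsScalarTower R S L]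
  [IsScalarTower R K L] [FiniteDimensional K L] [Algebra.IsSeparable K L] {Tr : S →ₗ[R] R}

theorem eq_zero_of_forall_trace_mul_eq_zero [IsDomain R] [IsFractionRing R K] [IsDomain S]
    [IsFractionRing S L] [FaithfulSMul R S] [Algebra.IsAlgebraic R S]
    (hTr : ∀ s : S, algebraMap R K (Tr s) = Algebra.trace K L (algebraMap S L s))
    {s : S} (h : ∀ x, Tr (s * x) = 0) : s = 0 := by
  suffices ∀ y : L, Algebra.traceForm K L (algebraMap S L s) y = 0 from
    IsFractionRing.injective S L <| by simpa using (traceForm_nondegenerate K L).1 _ this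
  intro y
  -- `L` is also the localization of `S` at `R ∖ {0}`, as `S` is algebraic over `R`.
  obtain ⟨⟨x, _, r, hr, rfl⟩, hy⟩ :=
    IsLocalization.surj (Algebra.algebraMapSubmonoid S (nonZeroDivisors R)) y
  rw [mul_comm] at hy
  have hrK : algebraMap R K r ≠ 0 := IsFractionRing.to_map_ne_zero_of_mem_nonZeroDivisors hr
  have : algebraMap R K r * Algebra.trace K L (algebraMap S L s * y) = 0 := by
    rw [← smul_eq_mul, ← map_smul, algebraMap_smul, Algebra.smul_def,
      IsScalarTower.algebraMap_apply R S L, mul_left_comm, hy, ← map_mul, ← hTr, h, map_zero]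
  simpa [hrK] using this

theorem AlgHom.apply_mem_of_mem_maximalIdeal {A : Type*} [CommRing A] [Algebra R A]
    [Algebra.IsIntegral R A] [IsLocalRing S] (f : S →ₐ[R] A) (P : Ideal A) [P.IsMaximal]
    {a : S} (ha : a ∈ maximalIdeal S) : f a ∈ P := by
  have hf : (f : S →+* A).IsIntegral := RingHom.IsIntegral.tower_top (algebraMap R S) _ <| by
    rw [f.comp_algebraMap]
    exact Algebra.IsIntegral.isIntegral
  have := Ideal.isMaximal_comap_of_isIntegral_of_isMaximal' _ hf P
  rw [← eq_maximalIdeal this] at ha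
  exact ha

theorem not_isUnit_trace_of_mem_maximalIdeal [IsLocalRing S] [Algebra.IsIntegral R S]
    (hTr : ∀ s : S, algebraMap R K (Tr s) = Algebra.trace K L (algebraMap S L s))
    {a : S} (ha : a ∈ maximalIdeal S) : ¬ IsUnit (Tr a) := by
  let Ω := AlgebraicClosure K
  let T := integralClosure R Ω
  let embed (σ : L →ₐ[K] Ω) : S →ₐ[R] T :=
    ((σ.restrictScalars R).comp (IsScalarTower.toAlgHom R S L)).codRestrict T
      fun s => (Algebra.IsIntegral.isIntegral s).map _
  obtain ⟨P, hP⟩ := Ideal.exists_maximal T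
  have hsum : algebraMap R T (Tr a) = ∑ σ : L →ₐ[K] Ω, embed σ a := by
    apply Subtype.ext
    rw [AddSubmonoidClass.coe_finsetSum]
    show algebraMap R Ω (Tr a) = _
    rw [IsScalarTower.algebraMap_apply R K Ω, hTr, trace_eq_sum_embeddings (E := Ω)]
    rfl
  intro hu
  refine hP.ne_top (P.eq_top_of_isUnit_mem ?_ (hu.map (algebraMap R T)))
  rw [hsum]
  exact P.sum_mem fun σ _ => (embed σ).apply_mem_of_mem_maximalIdeal P ha

end FractionFields

theorem factor_through_trace_general
    (R S K L : Type*)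
    [CommRing R] [IsDomain R]
    [CommRing S] [IsDomain S] [IsLocalRing S]
    [Algebra R S] [Module.Finite R S]
    (hinj : Function.Injective (algebraMap R S))
    [Field K] [Field L] [Algebra R K] [IsFractionRing R K]
    [Algebra S L] [IsFractionRing S L]
    [Algebra K L] [Algebra R L] [IsScalarTower R S L] [IsScalarTower R K L]
    [FiniteDimensional K L] [Algebra.IsSeparable K L]
    (Tr : S →ₗ[R] R)
    (hTr : ∀ s : S, algebraMap R K (Tr s) = Algebra.trace K L (algebraMap S L s))
    (hgen : ∀ ψ : S →ₗ[R] R, ∃ s : S, ∀ x : S, ψ x = Tr (s * x)) :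
    ∀ (N : Type v) [AddCommGroup N] [Module R N] [Module S N] [IsScalarTower R S N],
      (∀ ψ : N →ₗ[R] R, ∃ g : N →ₗ[S] S, (∀ x : N, ψ x = Tr (g x)) ∧
        (Function.Surjective ψ → Function.Surjective g)) ∧
      ((¬ ∃ g : N →ₗ[S] S, Function.Surjective g) →
        ¬ ∃ ψ : N →ₗ[R] R, Function.Surjective ψ) := by
  intro N _ _ _ _
  have : FaithfulSMul R S := (faithfulSMul_iff_algebraMap_injective R S).mpr hinj
  have factor (ψ : N →ₗ[R] R) : ∃ g : N →ₗ[S] S, (∀ x : N, ψ x = Tr (g x)) ∧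
      (Function.Surjective ψ → Function.Surjective g) := by
    obtain ⟨g, hg⟩ := exists_linearMap_eq_trace_comp
      (fun s => eq_zero_of_forall_trace_mul_eq_zero hTr) hgen ψ
    refine ⟨g, hg, fun hψ => ?_⟩
    obtain ⟨x, hx⟩ := hψ 1
    refine g.surjective_of_isUnit_apply (x := x) (notMem_maximalIdeal.mp fun hmem => ?_)
    exact not_isUnit_trace_of_mem_maximalIdeal hTr hmem (by rw [← hg, hx]; exact isUnit_one)
  refine ⟨factor, fun hS ⟨ψ, hψ⟩ => hS ?_⟩
  obtain ⟨g, -, hg⟩ := factor ψ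
  exact ⟨g, hg hψ⟩

/-- Suppose `Hom_R(S,R)` is generated as an `S`-module (via premultiplication)
by the trace map `Tr : S → R`.  Then every `R`-linear `ψ : N → R` on an `S`-module `N` factors
as `ψ = Tr ∘ g` with `g : N → S` `S`-linear, surjective whenever `ψ` is; consequently if `N` has
no nonzero free `S`-module direct summand then it has no nonzero free `R`-module direct summand. -/
theorem factor_through_trace
    (R S K L : Type*)
    [CommRing R] [IsDomain R] [IsNoetherianRing R] [IsLocalRing R] [IsIntegrallyClosed R]
    [CommRing S] [IsDomain S] [IsNoetherianRing S] [IsLocalRing S] [IsIntegrallyClosed S]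
    [Algebra R S] [Module.Finite R S]
    (hinj : Function.Injective (algebraMap R S))
    [IsLocalHom (algebraMap R S)]
    [Field K] [Field L] [Algebra R K] [IsFractionRing R K]
    [Algebra S L] [IsFractionRing S L]
    [Algebra K L] [Algebra R L] [IsScalarTower R S L] [IsScalarTower R K L]
    [FiniteDimensional K L] [Algebra.IsSeparable K L]
    (Tr : S →ₗ[R] R)
    (hTr : ∀ s : S, algebraMap R K (Tr s) = Algebra.trace K L (algebraMap S L s))
    (hgen : ∀ ψ : S →ₗ[R] R, ∃ s : S, ∀ x : S, ψ x = Tr (s * x)) :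
    ∀ (N : Type v) [AddCommGroup N] [Module R N] [Module S N] [IsScalarTower R S N],
      (∀ ψ : N →ₗ[R] R, ∃ g : N →ₗ[S] S, (∀ x : N, ψ x = Tr (g x)) ∧
        (Function.Surjective ψ → Function.Surjective g)) ∧
      ((¬ ∃ g : N →ₗ[S] S, Function.Surjective g) →
        ¬ ∃ ψ : N →ₗ[R] R, Function.Surjective ψ) :=
  factor_through_trace_general R S K L hinj Tr hTr hgen
end

section
/- Let (R,m,k) ⊆ (S,n,ℓ) be a module-finite local extension of normal local domains with finite separable fraction field extension, and suppose the trace map Tr : S → R is surjective. Let D = S·Tr ⊆ Hom_R(S,R) be the S-submodule generated by Tr, where S acts on Hom_R(S,R) by premultiplication (s·φ)(x) = φ(sx). Then {φ ∈ D : φ(S) ⊆ m} = n·D, and length_R(D / (n·D)) = [ℓ : k]. -/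
/-! For `t ∈ 𝔫` and a `K`-embedding `σ : L → K̄`, the element `σ t` is integral over `R`; if `Q`
is a maximal ideal of the integral closure of `R` in `K̄` lying over `𝔪`, then `σ⁻¹ Q` is a prime
of the local ring `S` over `𝔪`, hence equals `𝔫`, so `σ t ∈ Q`. Summing over `σ` gives
`Tr t ∈ Q ∩ R = 𝔪`. As `Tr` is surjective, `x ↦ Tr (s x)` lands in `𝔪` exactly when `s ∈ 𝔫`.
Nondegeneracy of the trace form makes `s ↦ s · Tr` injective, so `D / 𝔫 D ≅ S / 𝔫 = ℓ`, whose
`R`-length is `[ℓ : k]`. -/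

/-- The `R`-linear map `S → Hom_R(S,R)` sending `s` to `x ↦ Tr (s * x)`, i.e. premultiplication
of the trace map by `s`.  Its range is the `S`-submodule `S · Tr` of `Hom_R(S,R)` and the image
of `n` is `n · (S · Tr)`. -/
noncomputable def traceMulMap (R S : Type*) [CommRing R] [CommRing S] [Algebra R S]
    (Tr : S →ₗ[R] R) : S →ₗ[R] (S →ₗ[R] R) :=
  (LinearMap.llcomp R S S R Tr).comp (LinearMap.mul R S)

open IsLocalRing

theorem traceMulMap_apply {R S : Type*} [CommRing R] [CommRing S] [Algebra R S]
    (Tr : S →ₗ[R] R) (s x : S) : traceMulMap R S Tr s x = Tr (s * x) :=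
  rfl

theorem comap_eq_maximalIdeal_of_comap_eq_maximalIdeal {R S T : Type*}
    [CommRing R] [IsLocalRing R] [CommRing S] [IsLocalRing S] [CommRing T]
    [Algebra R S] [Algebra.IsIntegral R S] [Algebra R T]
    (g : S →ₐ[R] T) (Q : Ideal T) [Q.IsPrime]
    (hQ : Q.comap (algebraMap R T) = maximalIdeal R) :
    Q.comap g = maximalIdeal S := by
  have hlies : (Q.comap g).comap (algebraMap R S) = maximalIdeal R := by
    rw [← g.comp_algebraMap, ← Ideal.comap_comap] at hQ
    exact hQ
  exact eq_maximalIdeal <|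
    Ideal.isMaximal_of_isIntegral_of_isMaximal_comap _ (hlies ▸ maximalIdeal.isMaximal R)

theorem trace_mem_maximalIdeal {R S K L : Type*}
    [CommRing R] [IsLocalRing R] [CommRing S] [IsLocalRing S]
    [Algebra R S] [Algebra.IsIntegral R S]
    [Field K] [Field L] [Algebra R K] [IsFractionRing R K] [Algebra S L]
    [Algebra K L] [Algebra R L] [IsScalarTower R S L] [IsScalarTower R K L]
    [FiniteDimensional K L] [Algebra.IsSeparable K L]
    (Tr : S →ₗ[R] R)
    (hTr : ∀ s : S, algebraMap R K (Tr s) = Algebra.trace K L (algebraMap S L s))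
    {t : S} (ht : t ∈ maximalIdeal S) : Tr t ∈ maximalIdeal R := by
  let E := AlgebraicClosure K
  let T := integralClosure R E
  have hinj : Function.Injective (algebraMap R T) := by
    refine .of_comp (f := T.val) ?_
    rw [← AlgHom.coe_toRingHom, ← RingHom.coe_comp, T.val.comp_algebraMap,
      IsScalarTower.algebraMap_eq R K E, RingHom.coe_comp]
    exact (algebraMap K E).injective.comp (IsFractionRing.injective R K)
  obtain ⟨Q, hQ, hQm⟩ := Ideal.exists_ideal_over_maximal_of_isIntegral (S := T) (maximalIdeal R)
    (by simp [(RingHom.injective_iff_ker_eq_bot _).mp hinj])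
  let g (σ : L →ₐ[K] E) : S →ₐ[R] T :=
    ((σ.restrictScalars R).comp (IsScalarTower.toAlgHom R S L)).codRestrict T fun s =>
      (Algebra.IsIntegral.isIntegral (R := R) s).map _
  have hsum : algebraMap R T (Tr t) = ∑ σ, g σ t := by
    apply Subtype.ext
    rw [AddSubmonoidClass.coe_finsetSum]
    change algebraMap R E (Tr t) = _
    rw [IsScalarTower.algebraMap_apply R K E, hTr, trace_eq_sum_embeddings E]
    rfl
  have hmem : algebraMap R T (Tr t) ∈ Q := hsum ▸ Ideal.sum_mem _ fun σ _ => by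
    rw [← Ideal.mem_comap (f := g σ), comap_eq_maximalIdeal_of_comap_eq_maximalIdeal _ _ hQm]
    exact ht
  rwa [← Ideal.mem_comap, hQm] at hmem

theorem exists_smul_eq_algebraMap {R S K L : Type*}
    [CommRing R] [IsDomain R] [CommRing S] [IsIntegrallyClosed S] [Algebra R S]
    [Field K] [Field L] [Algebra R K] [IsFractionRing R K] [Algebra S L] [IsFractionRing S L]
    [Algebra K L] [Algebra R L] [IsScalarTower R S L] [IsScalarTower R K L]
    [Algebra.IsAlgebraic K L] (z : L) :
    ∃ r : R, r ≠ 0 ∧ ∃ a : S, algebraMap S L a = r • z := by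
  have : Algebra.IsAlgebraic R K := IsLocalization.isAlgebraic K (nonZeroDivisors R)
  have : Algebra.IsAlgebraic R L := Algebra.IsAlgebraic.trans R K L
  obtain ⟨r, hr, hint⟩ := (Algebra.IsAlgebraic.isAlgebraic (R := R) z).exists_integral_multiple
  obtain ⟨a, ha⟩ := IsIntegrallyClosed.isIntegral_iff.mp (hint.tower_top (A := S))
  exact ⟨r, hr, a, ha⟩

theorem traceMulMap_injective {R S K L : Type*}
    [CommRing R] [IsDomain R] [CommRing S] [IsIntegrallyClosed S] [Algebra R S]
    [Field K] [Field L] [Algebra R K] [IsFractionRing R K] [Algebra S L] [IsFractionRing S L]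
    [Algebra K L] [Algebra R L] [IsScalarTower R S L] [IsScalarTower R K L]
    [FiniteDimensional K L] [Algebra.IsSeparable K L]
    (Tr : S →ₗ[R] R)
    (hTr : ∀ s : S, algebraMap R K (Tr s) = Algebra.trace K L (algebraMap S L s)) :
    Function.Injective (traceMulMap R S Tr) := by
  rw [injective_iff_map_eq_zero]
  intro s hs
  suffices ∀ z : L, Algebra.traceForm K L (algebraMap S L s) z = 0 from
    IsFractionRing.injective S L <| by simpa using (traceForm_nondegenerate K L).1 _ this
  intro z
  obtain ⟨r, hr, a, ha⟩ := exists_smul_eq_algebraMap (R := R) (S := S) (K := K) z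
  have hr' : algebraMap R K r ≠ 0 := (map_ne_zero_iff _ (IsFractionRing.injective R K)).mpr hr
  have : algebraMap R K r * Algebra.trace K L (algebraMap S L s * z) = 0 := by
    rw [← smul_eq_mul, ← map_smul, ← mul_smul_comm, algebraMap_smul, ← ha, ← map_mul, ← hTr,
      ← traceMulMap_apply, hs, LinearMap.zero_apply, map_zero]
  exact (mul_eq_zero.mp this).resolve_left hr'

theorem forall_map_mul_mem_maximalIdeal_iff {R S : Type*}
    [CommRing R] [IsLocalRing R] [CommRing S] [IsLocalRing S] [Algebra R S]
    (Tr : S →ₗ[R] R) (hsurj : Function.Surjective Tr)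
    (hTr : ∀ t ∈ maximalIdeal S, Tr t ∈ maximalIdeal R) (s : S) :
    (∀ x, Tr (s * x) ∈ maximalIdeal R) ↔ s ∈ maximalIdeal S := by
  refine ⟨fun h => ?_, fun hs x => hTr _ (Ideal.mul_mem_right x _ hs)⟩
  by_contra hs
  obtain ⟨u, rfl⟩ := not_not.mp ((mem_maximalIdeal s).not.mp hs)
  obtain ⟨c, hc⟩ := hsurj 1
  refine (maximalIdeal.isMaximal R).ne_top (Ideal.eq_top_of_isUnit_mem _ ?_ isUnit_one)
  simpa [← hc] using h (↑u⁻¹ * c)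

noncomputable def LinearMap.rangeQuotientMapEquiv {R M N : Type*} [CommRing R]
    [AddCommGroup M] [Module R M] [AddCommGroup N] [Module R N]
    (f : M →ₗ[R] N) (hf : Function.Injective f) (p : Submodule R M) :
    (LinearMap.range f ⧸ (p.map f).comap (LinearMap.range f).subtype) ≃ₗ[R] M ⧸ p :=
  (Submodule.Quotient.equiv p _ (LinearEquiv.ofInjective f hf) <| by
    ext ⟨_, x, rfl⟩
    change LinearEquiv.ofInjective f hf x ∈ _ ↔ _
    simp [hf.eq_iff]).symm

theorem length_quotient_maximalIdeal_restrictScalars (R S : Type*)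
    [CommRing R] [IsLocalRing R] [CommRing S] [IsLocalRing S] [Algebra R S]
    [IsLocalHom (algebraMap R S)] [Module.Finite R S] :
    Module.length R (S ⧸ (maximalIdeal S).restrictScalars R) =
      Module.finrank (ResidueField R) (ResidueField S) := by
  rw [(Submodule.Quotient.restrictScalarsEquiv R (maximalIdeal S)).length_eq]
  change Module.length R (ResidueField S) = _
  rw [Module.length_eq_of_surjective (R := ResidueField R) residue_surjective,
    Module.length_eq_finrank]

theorem trace_summands_count_general
    (R S K L : Type*)
    [CommRing R] [IsDomain R] [IsLocalRing R]
    [CommRing S] [IsLocalRing S] [IsIntegrallyClosed S]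
    [Algebra R S] [Module.Finite R S]
    [IsLocalHom (algebraMap R S)]
    [Field K] [Field L] [Algebra R K] [IsFractionRing R K]
    [Algebra S L] [IsFractionRing S L]
    [Algebra K L] [Algebra R L] [IsScalarTower R S L] [IsScalarTower R K L]
    [FiniteDimensional K L] [Algebra.IsSeparable K L]
    (Tr : S →ₗ[R] R)
    (hTr : ∀ s : S, algebraMap R K (Tr s) = Algebra.trace K L (algebraMap S L s))
    (hTrSurj : Function.Surjective Tr) :
    (∀ φ ∈ LinearMap.range (traceMulMap R S Tr),
      (∀ x : S, φ x ∈ IsLocalRing.maximalIdeal R) ↔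
        φ ∈ Submodule.map (traceMulMap R S Tr)
          ((IsLocalRing.maximalIdeal S).restrictScalars R)) ∧
    (letI : Algebra (IsLocalRing.ResidueField R) (IsLocalRing.ResidueField S) :=
        (IsLocalRing.ResidueField.map (algebraMap R S)).toAlgebra
     (Order.height
        (⊤ : Submodule R
          (@HasQuotient.Quotient (↥(LinearMap.range (traceMulMap R S Tr))) _
            (@Submodule.hasQuotient R _ _ _ _)
            (Submodule.comap (LinearMap.range (traceMulMap R S Tr)).subtype
              (Submodule.map (traceMulMap R S Tr)
                ((IsLocalRing.maximalIdeal S).restrictScalars R))))) : ℕ∞) =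
      (Module.finrank (IsLocalRing.ResidueField R) (IsLocalRing.ResidueField S) : ℕ∞)) := by
  have hmax := forall_map_mul_mem_maximalIdeal_iff Tr hTrSurj fun _ => trace_mem_maximalIdeal Tr hTr
  refine ⟨?_, ?_⟩
  · rintro φ ⟨s, rfl⟩
    refine ⟨fun h => ⟨s, (hmax s).mp h, rfl⟩, ?_⟩
    rintro ⟨s', hs', hs's⟩ x
    rw [← hs's]
    exact (hmax s').mpr hs' x
  · rw [← Module.length_eq_height,
      (LinearMap.rangeQuotientMapEquiv _ (traceMulMap_injective Tr hTr) _).length_eq,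
      length_quotient_maximalIdeal_restrictScalars]

/-- Let `(R,m,k) ⊆ (S,n,ℓ)` be a module-finite local extension of normal local
domains with finite separable fraction field extension and surjective trace map `Tr : S → R`.
Let `D = S · Tr ⊆ Hom_R(S,R)`.  Then `{φ ∈ D : φ(S) ⊆ m} = n · D` and
`length_R (D / (n · D)) = [ℓ : k]`. -/
theorem trace_summands_count
    (R S K L : Type*)
    [CommRing R] [IsDomain R] [IsNoetherianRing R] [IsLocalRing R] [IsIntegrallyClosed R]
    [CommRing S] [IsDomain S] [IsNoetherianRing S] [IsLocalRing S] [IsIntegrallyClosed S]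
    [Algebra R S] [Module.Finite R S]
    (hinj : Function.Injective (algebraMap R S))
    [IsLocalHom (algebraMap R S)]
    [Field K] [Field L] [Algebra R K] [IsFractionRing R K]
    [Algebra S L] [IsFractionRing S L]
    [Algebra K L] [Algebra R L] [IsScalarTower R S L] [IsScalarTower R K L]
    [FiniteDimensional K L] [Algebra.IsSeparable K L]
    (Tr : S →ₗ[R] R)
    (hTr : ∀ s : S, algebraMap R K (Tr s) = Algebra.trace K L (algebraMap S L s))
    (hTrSurj : Function.Surjective Tr) :
    (∀ φ ∈ LinearMap.range (traceMulMap R S Tr),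
      (∀ x : S, φ x ∈ IsLocalRing.maximalIdeal R) ↔
        φ ∈ Submodule.map (traceMulMap R S Tr)
          ((IsLocalRing.maximalIdeal S).restrictScalars R)) ∧
    (letI : Algebra (IsLocalRing.ResidueField R) (IsLocalRing.ResidueField S) :=
        (IsLocalRing.ResidueField.map (algebraMap R S)).toAlgebra
     (Order.height
        (⊤ : Submodule R
          (@HasQuotient.Quotient (↥(LinearMap.range (traceMulMap R S Tr))) _
            (@Submodule.hasQuotient R _ _ _ _)
            (Submodule.comap (LinearMap.range (traceMulMap R S Tr)).subtype
              (Submodule.map (traceMulMap R S Tr)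
                ((IsLocalRing.maximalIdeal S).restrictScalars R))))) : ℕ∞) =
      (Module.finrank (IsLocalRing.ResidueField R) (IsLocalRing.ResidueField S) : ℕ∞)) :=
  trace_summands_count_general R S K L Tr hTr hTrSurj
end
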